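/- For each j ∈ {1,2,3,4}, the conjugated matrix A = B⁻¹·T_j·B is orthogonal (Aᵀ·A = I₈) and preserves the standard hyperKähler triple: Aᵀ·Ω_k·A = Ω_k for k = 1, 2, 3. Hence the conjugated group B⁻¹·G₁·B lies in Sp(2) ⊂ SO(8), i.e. the group G₁ preserves a hyperKähler structure on ℝ⁸. -/

import Mathlib

open Matrix

/-- The generator `T1`. -/
noncomputable def T1 : Matrix (Fin 8) (Fin 8) ℝ :=
  (1/2 : ℝ) • !![
    0, 0, -1, 1, 0, 0, 1, 1;
    0, 0, 1, 1, 0, 0, -1, 1;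
    1, -1, 0, 0, -1, -1, 0, 0;
    -1, -1, 0, 0, -1, 1, 0, 0;
    0, 0, 1, 1, 0, 0, 1, -1;
    0, 0, 1, -1, 0, 0, 1, 1;
    -1, 1, 0, 0, -1, -1, 0, 0;
    -1, -1, 0, 0, 1, -1, 0, 0]

/-- The generator `T2`. -/
noncomputable def T2 : Matrix (Fin 8) (Fin 8) ℝ :=
  (1/2 : ℝ) • !![
    0, 0, -1, -1, 0, 0, 1, -1;
    0, 0, -1, 1, 0, 0, 1, 1;
    1, 1, 0, 0, -1, 1, 0, 0;
    1, -1, 0, 0, 1, 1, 0, 0;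
    0, 0, 1, -1, 0, 0, 1, 1;
    0, 0, -1, -1, 0, 0, -1, 1;
    -1, -1, 0, 0, -1, 1, 0, 0;
    1, -1, 0, 0, -1, -1, 0, 0]

/-- The generator `T3`. -/
noncomputable def T3 : Matrix (Fin 8) (Fin 8) ℝ :=
  (1/2 : ℝ) • !![
    0, 0, 1, -1, 0, 0, -1, 1;
    0, 0, -1, -1, 0, 0, -1, -1;
    -1, 1, 0, 0, 1, -1, 0, 0;
    1, 1, 0, 0, -1, -1, 0, 0;
    0, 0, -1, 1, 0, 0, -1, 1;
    0, 0, 1, 1, 0, 0, -1, -1;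
    1, 1, 0, 0, 1, 1, 0, 0;
    -1, 1, 0, 0, -1, 1, 0, 0]

/-- The generator `T4`. -/
noncomputable def T4 : Matrix (Fin 8) (Fin 8) ℝ :=
  (1/2 : ℝ) • !![
    0, 0, -1, 1, 0, 0, -1, -1;
    0, 0, 1, 1, 0, 0, 1, -1;
    1, -1, 0, 0, 1, 1, 0, 0;
    -1, -1, 0, 0, 1, -1, 0, 0;
    0, 0, -1, -1, 0, 0, 1, -1;
    0, 0, -1, 1, 0, 0, 1, 1;
    1, -1, 0, 0, -1, -1, 0, 0;
    1, 1, 0, 0, 1, -1, 0, 0]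

/-- The basis-change matrix `B` of Appendix C. -/
noncomputable def B : Matrix (Fin 8) (Fin 8) ℝ :=
  !![
    1, 0, 0, 0, 0, 0, 0, 0;
    0, 1, 0, 0, 0, 0, 0, 0;
    0, 0, 0, 0, -1, 0, 0, 0;
    0, 0, 0, 0, 0, 1, 0, 0;
    0, 0, 1, 0, 0, 0, 0, 0;
    0, 0, 0, 1, 0, 0, 0, 0;
    0, 0, 0, 0, 0, 0, 1, 0;
    0, 0, 0, 0, 0, 0, 0, 1]

/-- The Kähler form `ω1` of the standard hyperKähler triple on ℝ⁸, as a matrix. -/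
def Omega1 : Matrix (Fin 8) (Fin 8) ℝ :=
  !![
    0, 1, 0, 0, 0, 0, 0, 0;
    -1, 0, 0, 0, 0, 0, 0, 0;
    0, 0, 0, 1, 0, 0, 0, 0;
    0, 0, -1, 0, 0, 0, 0, 0;
    0, 0, 0, 0, 0, 1, 0, 0;
    0, 0, 0, 0, -1, 0, 0, 0;
    0, 0, 0, 0, 0, 0, 0, 1;
    0, 0, 0, 0, 0, 0, -1, 0]

/-- The Kähler form `ω2` of the standard hyperKähler triple on ℝ⁸, as a matrix. -/
def Omega2 : Matrix (Fin 8) (Fin 8) ℝ :=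
  !![
    0, 0, 1, 0, 0, 0, 0, 0;
    0, 0, 0, -1, 0, 0, 0, 0;
    -1, 0, 0, 0, 0, 0, 0, 0;
    0, 1, 0, 0, 0, 0, 0, 0;
    0, 0, 0, 0, 0, 0, 1, 0;
    0, 0, 0, 0, 0, 0, 0, -1;
    0, 0, 0, 0, -1, 0, 0, 0;
    0, 0, 0, 0, 0, 1, 0, 0]

/-- The Kähler form `ω3` of the standard hyperKähler triple on ℝ⁸, as a matrix. -/
def Omega3 : Matrix (Fin 8) (Fin 8) ℝ :=
  !![
    0, 0, 0, 1, 0, 0, 0, 0;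
    0, 0, 1, 0, 0, 0, 0, 0;
    0, -1, 0, 0, 0, 0, 0, 0;
    -1, 0, 0, 0, 0, 0, 0, 0;
    0, 0, 0, 0, 0, 0, 0, 1;
    0, 0, 0, 0, 0, 0, 1, 0;
    0, 0, 0, 0, 0, -1, 0, 0;
    0, 0, 0, 0, -1, 0, 0, 0]

/-!
An orthogonal matrix `A` satisfies `Aᵀ Ω A = Ω` exactly when it commutes with `Ω`. Since `B` is
orthogonal, conjugating back by `B` reduces the claim to: each `T_j` is orthogonal and commutes
with `B Ω₁ B⁻¹` and `B Ω₂ B⁻¹`. Commutation with `Ω₃` then comes for free, because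
`Ω₃ = Ω₂ Ω₁`. What remains are products of explicit sparse `8 × 8` matrices.
-/

namespace Matrix

variable {n R : Type*} [Fintype n] [DecidableEq n]

theorem one_fin_eight [Zero R] [One R] :
    (1 : Matrix (Fin 8) (Fin 8) R) =
      !![1, 0, 0, 0, 0, 0, 0, 0;
        0, 1, 0, 0, 0, 0, 0, 0;
        0, 0, 1, 0, 0, 0, 0, 0;
        0, 0, 0, 1, 0, 0, 0, 0;
        0, 0, 0, 0, 1, 0, 0, 0;
        0, 0, 0, 0, 0, 1, 0, 0;
        0, 0, 0, 0, 0, 0, 1, 0;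
        0, 0, 0, 0, 0, 0, 0, 1] := by
  ext i j
  fin_cases i <;> fin_cases j <;> rfl

theorem transpose_mul_mul_self_eq_of_commute [Semiring R] {A Ω : Matrix n n R}
    (hA : Aᵀ * A = 1) (hΩ : Commute A Ω) : Aᵀ * Ω * A = Ω := by
  rw [Matrix.mul_assoc, ← hΩ.eq, ← Matrix.mul_assoc, hA, Matrix.one_mul]

variable [CommRing R]

theorem transpose_mul_self_conj_eq_one {B T : Matrix n n R} (hB : B * Bᵀ = 1)
    (hT : T * Tᵀ = 1) : (B⁻¹ * T * B)ᵀ * (B⁻¹ * T * B) = 1 := by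
  have hTtT : Tᵀ * T = 1 := mul_eq_one_comm.mp hT
  have hBtB : Bᵀ * B = 1 := mul_eq_one_comm.mp hB
  calc (B⁻¹ * T * B)ᵀ * (B⁻¹ * T * B) = Bᵀ * Tᵀ * (B * Bᵀ) * T * B := by
        simp only [inv_eq_right_inv hB, transpose_mul, transpose_transpose, Matrix.mul_assoc]
    _ = 1 := by rw [hB, Matrix.mul_one, Matrix.mul_assoc Bᵀ, hTtT, Matrix.mul_one, hBtB]

theorem commute_conj_of_commute {B T Ω Ω' : Matrix n n R} (hB : IsUnit B.det)
    (hΩ : Ω' * B = B * Ω) (hT : Commute T Ω') : Commute (B⁻¹ * T * B) Ω := by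
  have hΩ' : Ω = B⁻¹ * Ω' * B := by
    rw [Matrix.mul_assoc, hΩ, ← Matrix.mul_assoc, nonsing_inv_mul B hB, Matrix.one_mul]
  rw [commute_iff_eq, hΩ']
  simp only [Matrix.mul_assoc, mul_nonsing_inv_cancel_left B _ hB]
  rw [← Matrix.mul_assoc T, hT.eq, Matrix.mul_assoc]

end Matrix

open Matrix

-- `Omegaₖ' = B * Omegaₖ * B⁻¹`: the forms `ω₁`, `ω₂` in the coordinates of the generators `T_j`.
def Omega1' : Matrix (Fin 8) (Fin 8) ℝ :=
  !![
    0, 1, 0, 0, 0, 0, 0, 0;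
    -1, 0, 0, 0, 0, 0, 0, 0;
    0, 0, 0, -1, 0, 0, 0, 0;
    0, 0, 1, 0, 0, 0, 0, 0;
    0, 0, 0, 0, 0, 1, 0, 0;
    0, 0, 0, 0, -1, 0, 0, 0;
    0, 0, 0, 0, 0, 0, 0, 1;
    0, 0, 0, 0, 0, 0, -1, 0]

def Omega2' : Matrix (Fin 8) (Fin 8) ℝ :=
  !![
    0, 0, 0, 0, 1, 0, 0, 0;
    0, 0, 0, 0, 0, -1, 0, 0;
    0, 0, 0, 0, 0, 0, -1, 0;
    0, 0, 0, 0, 0, 0, 0, -1;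
    -1, 0, 0, 0, 0, 0, 0, 0;
    0, 1, 0, 0, 0, 0, 0, 0;
    0, 0, 1, 0, 0, 0, 0, 0;
    0, 0, 0, 1, 0, 0, 0, 0]

theorem B_mul_transpose_self : B * Bᵀ = 1 := by
  simp only [B, one_fin_eight, cons_mul, vecMul_transpose, cons_mulVec, cons_dotProduct_cons,
    dotProduct_of_isEmpty]
  norm_num [empty_eq]

theorem Omega1'_mul_B : Omega1' * B = B * Omega1 := by
  simp [Omega1', B, Omega1, cons_mul, vecMul_cons]

theorem Omega2'_mul_B : Omega2' * B = B * Omega2 := by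
  simp [Omega2', B, Omega2, cons_mul, vecMul_cons]

theorem Omega2_mul_Omega1 : Omega2 * Omega1 = Omega3 := by
  simp [Omega1, Omega2, Omega3, cons_mul, vecMul_cons]

def generators : Set (Matrix (Fin 8) (Fin 8) ℝ) := {T1, T2, T3, T4}

theorem mul_transpose_self_of_mem_generators : ∀ T ∈ generators, T * Tᵀ = 1 := by
  rintro T (rfl | rfl | rfl | rfl) <;>
  · simp only [T1, T2, T3, T4]
    rw [transpose_smul, smul_mul_smul_comm, one_fin_eight]
    simp only [cons_mul, vecMul_transpose, cons_mulVec, cons_dotProduct_cons,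
      dotProduct_of_isEmpty]
    norm_num [empty_eq]

theorem commute_Omega1'_of_mem_generators : ∀ T ∈ generators, Commute T Omega1' := by
  rintro T (rfl | rfl | rfl | rfl) <;>
  · simp only [commute_iff_eq, T1, T2, T3, T4, Omega1', smul_mul]
    simp [cons_mul, vecMul_cons]

theorem commute_Omega2'_of_mem_generators : ∀ T ∈ generators, Commute T Omega2' := by
  rintro T (rfl | rfl | rfl | rfl) <;>
  · simp only [commute_iff_eq, T1, T2, T3, T4, Omega2', smul_mul]
    simp [cons_mul, vecMul_cons]

/-- For each generator `T` of `G₁`, the conjugated matrix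
`A = B⁻¹ * T * B` is orthogonal and preserves the standard hyperKähler triple
`Ω₁, Ω₂, Ω₃`; hence `B⁻¹ · G₁ · B ⊆ Sp(2) ⊂ SO(8)`, i.e. `G₁` preserves a
hyperKähler structure on ℝ⁸. -/
theorem conjugated_generators_preserve_hyperkahler_triple :
    ∀ T ∈ ({T1, T2, T3, T4} : Set (Matrix (Fin 8) (Fin 8) ℝ)),
      (B⁻¹ * T * B)ᵀ * (B⁻¹ * T * B) = 1 ∧
      (B⁻¹ * T * B)ᵀ * Omega1 * (B⁻¹ * T * B) = Omega1 ∧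
      (B⁻¹ * T * B)ᵀ * Omega2 * (B⁻¹ * T * B) = Omega2 ∧
      (B⁻¹ * T * B)ᵀ * Omega3 * (B⁻¹ * T * B) = Omega3 := by
  intro T hT
  have hB : IsUnit B.det := isUnit_det_of_right_inverse B_mul_transpose_self
  have hA := transpose_mul_self_conj_eq_one B_mul_transpose_self
    (mul_transpose_self_of_mem_generators T hT)
  have h1 := commute_conj_of_commute hB Omega1'_mul_B (commute_Omega1'_of_mem_generators T hT)
  have h2 := commute_conj_of_commute hB Omega2'_mul_B (commute_Omega2'_of_mem_generators T hT)
  have h3 : Commute (B⁻¹ * T * B) Omega3 := Omega2_mul_Omega1 ▸ h2.mul_right h1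
  exact ⟨hA, transpose_mul_mul_self_eq_of_commute hA h1,
    transpose_mul_mul_self_eq_of_commute hA h2, transpose_mul_mul_self_eq_of_commute hA h3⟩
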